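/- Let J, H₀, …, H_r ∈ ℂ^{n×n} be Hermitian. Suppose the minimum of L(t) = λ_max(J + Σⱼ tⱼHⱼ) over t ∈ ℝ^{r+1} is attained at t̂ and λ_max(Ĥ) is a simple eigenvalue of Ĥ := J + Σⱼ t̂ⱼHⱼ. Then any eigenvector u of Ĥ associated with λ_max(Ĥ) satisfies u*Hⱼu = 0 for all j = 0,…,r, and hence sup{ u*Ju/u*u : u ≠ 0, u*Hⱼu = 0 ∀j } = min_t λ_max(J + Σ tⱼHⱼ). -/

import Mathlib

open Matrix

/-- The Euclidean norm of a complex vector. -/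
noncomputable def evNorm {n : ℕ} (v : Fin n → ℂ) : ℝ :=
  ‖(WithLp.equiv 2 (Fin n → ℂ)).symm v‖

/-- The largest eigenvalue of a Hermitian matrix, as the supremum of the Rayleigh
quotient over the unit sphere. -/
noncomputable def lambdaMax {n : ℕ} (H : Matrix (Fin n) (Fin n) ℂ) : ℝ :=
  sSup {r : ℝ | ∃ x : Fin n → ℂ, evNorm x = 1 ∧ r = (star x ⬝ᵥ H.mulVec x).re}

/-!
Let `u` be a unit eigenvector of `Ĥ = J + ∑ t̂ⱼ Hⱼ` for its simple top eigenvalue `λ`. Along a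
line `s ↦ Ĥ + s E` the function `λ_max` is squeezed between `λ + s u*Eu` (test the Rayleigh
quotient at `u`) and `λ + s u*Eu + K s²`: write a unit vector as `a u + w` with `w ⊥ u`; simplicity
gives a spectral gap `δ` on `u^⊥`, and the term `-δ ‖w‖²` absorbs the cross terms of size
`|s| ‖E‖ ‖w‖`. So `λ_max` has derivative `u*Eu` along the line, and minimality at `t̂` forces
`u*Hⱼu = 0` for every `j`, hence also for every top eigenvector, a multiple of `u`. On the
constraint set `u*Ju = u*Ĥu ≤ λ ‖u‖²`, and `u` itself attains `λ`.
-/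

open WithLp Filter Topology
open scoped InnerProductSpace Matrix.Norms.L2Operator

theorem hasDerivAt_of_isBigO_sq {𝕜 F : Type*} [NontriviallyNormedField 𝕜] [NormedAddCommGroup F]
    [NormedSpace 𝕜 F] {f : 𝕜 → F} {f' : F} {x : 𝕜}
    (h : (fun y => f y - f x - (y - x) • f') =O[𝓝 x] fun y => (y - x) ^ 2) :
    HasDerivAt f f' x := by
  rw [hasDerivAt_iff_isLittleO]
  exact h.trans_isLittleO <|
    (Asymptotics.isLittleO_pow_id one_lt_two).comp_tendsto (tendsto_sub_nhds_zero_iff.2 tendsto_id)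

section

variable {n : ℕ}

lemma star_dotProduct_eq_inner (x y : Fin n → ℂ) : star x ⬝ᵥ y = ⟪toLp 2 x, toLp 2 y⟫_ℂ :=
  dotProduct_comm _ _

lemma evNorm_eq_norm_toLp (x : Fin n → ℂ) : evNorm x = ‖toLp 2 x‖ := rfl

lemma star_dotProduct_self (x : Fin n → ℂ) : star x ⬝ᵥ x = ((evNorm x ^ 2 : ℝ) : ℂ) := by
  rw [star_dotProduct_eq_inner, evNorm_eq_norm_toLp, Complex.ofReal_pow]
  exact inner_self_eq_norm_sq_to_K _

lemma evNorm_smul (c : ℂ) (x : Fin n → ℂ) : evNorm (c • x) = ‖c‖ * evNorm x :=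
  norm_smul c (toLp 2 x)

lemma evNorm_nonneg (x : Fin n → ℂ) : 0 ≤ evNorm x :=
  norm_nonneg _

@[simp]
lemma evNorm_zero : evNorm (0 : Fin n → ℂ) = 0 := by
  simp [evNorm]

lemma norm_star_dotProduct_mulVec_le (A : Matrix (Fin n) (Fin n) ℂ) (x y : Fin n → ℂ) :
    ‖star x ⬝ᵥ A *ᵥ y‖ ≤ ‖A‖ * evNorm x * evNorm y := by
  rw [star_dotProduct_eq_inner, mul_comm ‖A‖, mul_assoc]
  exact (norm_inner_le_norm _ _).trans
    (mul_le_mul_of_nonneg_left (A.l2_opNorm_mulVec (toLp 2 y)) (norm_nonneg _))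

lemma Matrix.IsHermitian.ofReal_re_star_dotProduct_mulVec {A : Matrix (Fin n) (Fin n) ℂ}
    (hA : A.IsHermitian) (x : Fin n → ℂ) :
    ((star x ⬝ᵥ A *ᵥ x).re : ℂ) = star x ⬝ᵥ A *ᵥ x :=
  Complex.ext rfl (hA.im_star_dotProduct_mulVec_self x).symm

lemma bddAbove_rayleigh (A : Matrix (Fin n) (Fin n) ℂ) :
    BddAbove {r : ℝ | ∃ x : Fin n → ℂ, evNorm x = 1 ∧ r = (star x ⬝ᵥ A *ᵥ x).re} := by
  refine ⟨‖A‖, ?_⟩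
  rintro _ ⟨x, hx, rfl⟩
  simpa [hx] using (Complex.re_le_norm _).trans (norm_star_dotProduct_mulVec_le A x x)

lemma evNorm_pos {x : Fin n → ℂ} (hx : x ≠ 0) : 0 < evNorm x :=
  norm_pos_iff.2 ((toLp_eq_zero 2).not.2 hx)

lemma evNorm_inv_smul_self {x : Fin n → ℂ} (hx : x ≠ 0) :
    evNorm (((evNorm x)⁻¹ : ℂ) • x) = 1 := by
  rw [evNorm_smul, ← Complex.ofReal_inv, Complex.norm_real,
    Real.norm_of_nonneg (inv_nonneg.2 (evNorm_nonneg x)), inv_mul_cancel₀ (evNorm_pos hx).ne']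

lemma re_star_dotProduct_mulVec_le_lambdaMax (A : Matrix (Fin n) (Fin n) ℂ) (x : Fin n → ℂ) :
    (star x ⬝ᵥ A *ᵥ x).re ≤ lambdaMax A * evNorm x ^ 2 := by
  rcases eq_or_ne x 0 with rfl | hx
  · simp
  have hle := le_csSup (bddAbove_rayleigh A) ⟨_, evNorm_inv_smul_self hx, rfl⟩
  rw [mulVec_smul, star_smul, smul_dotProduct, dotProduct_smul, smul_smul, smul_eq_mul,
    ← Complex.ofReal_inv, Complex.star_def, Complex.conj_ofReal, ← Complex.ofReal_mul,
    Complex.re_ofReal_mul, ← mul_inv, ← pow_two, inv_mul_le_iff₀ (by positivity [evNorm_pos hx])]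
    at hle
  rwa [mul_comm] at hle

lemma lambdaMax_le {A : Matrix (Fin n) (Fin n) ℂ} {c : ℝ} (hn : ∃ x : Fin n → ℂ, evNorm x = 1)
    (h : ∀ x, evNorm x = 1 → (star x ⬝ᵥ A *ᵥ x).re ≤ c) : lambdaMax A ≤ c := by
  obtain ⟨x, hx⟩ := hn
  exact csSup_le ⟨_, x, hx, rfl⟩ (by rintro _ ⟨y, hy, rfl⟩; exact h y hy)

lemma Matrix.IsHermitian.star_dotProduct_mulVec_of_mulVec_eq {A : Matrix (Fin n) (Fin n) ℂ}
    (hA : A.IsHermitian) {u : Fin n → ℂ} {μ : ℝ} (hu : A *ᵥ u = (μ : ℂ) • u) (x : Fin n → ℂ) :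
    star u ⬝ᵥ A *ᵥ x = μ * (star u ⬝ᵥ x) := by
  have h : star u ᵥ* A = star (A *ᵥ u) := by rw [star_mulVec, hA.eq]
  rw [dotProduct_mulVec, h, hu, star_smul, smul_dotProduct, Complex.star_def, Complex.conj_ofReal,
    smul_eq_mul]

lemma Matrix.IsHermitian.inner_eigenvectorBasis_mulVec {A : Matrix (Fin n) (Fin n) ℂ}
    (hA : A.IsHermitian) (i : Fin n) (x : Fin n → ℂ) :
    ⟪hA.eigenvectorBasis i, toLp 2 (A *ᵥ x)⟫_ℂ =
      hA.eigenvalues i * ⟪hA.eigenvectorBasis i, toLp 2 x⟫_ℂ := by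
  rw [← toLp_ofLp 2 (hA.eigenvectorBasis i), ← star_dotProduct_eq_inner,
    ← star_dotProduct_eq_inner]
  exact hA.star_dotProduct_mulVec_of_mulVec_eq
    (by rw [hA.mulVec_eigenvectorBasis, Complex.coe_smul]) x

lemma Matrix.IsHermitian.re_star_dotProduct_mulVec_eq_sum {A : Matrix (Fin n) (Fin n) ℂ}
    (hA : A.IsHermitian) (x : Fin n → ℂ) :
    (star x ⬝ᵥ A *ᵥ x).re =
      ∑ i, hA.eigenvalues i * ‖⟪hA.eigenvectorBasis i, toLp 2 x⟫_ℂ‖ ^ 2 := by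
  rw [star_dotProduct_eq_inner, ← hA.eigenvectorBasis.sum_inner_mul_inner, Complex.re_sum]
  refine Finset.sum_congr rfl fun i _ => ?_
  rw [hA.inner_eigenvectorBasis_mulVec, ← inner_conj_symm, mul_left_comm, Complex.conj_mul',
    ← Complex.ofReal_pow, ← Complex.ofReal_mul, Complex.ofReal_re]

lemma Matrix.IsHermitian.eigenvalues_le_lambdaMax {A : Matrix (Fin n) (Fin n) ℂ}
    (hA : A.IsHermitian) (i : Fin n) : hA.eigenvalues i ≤ lambdaMax A := by
  have h := re_star_dotProduct_mulVec_le_lambdaMax A (hA.eigenvectorBasis i)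
  rw [evNorm_eq_norm_toLp, toLp_ofLp, hA.eigenvectorBasis.orthonormal.1 i, one_pow, mul_one] at h
  exact (hA.eigenvalues_eq i).trans_le h

lemma Matrix.IsHermitian.exists_spectral_gap {A : Matrix (Fin n) (Fin n) ℂ} (hA : A.IsHermitian)
    {u : Fin n → ℂ} (hsimple : ∀ v, A *ᵥ v = (lambdaMax A : ℂ) • v → ∃ z : ℂ, v = z • u) :
    ∃ δ > 0, ∀ w, star u ⬝ᵥ w = 0 →
      (star w ⬝ᵥ A *ᵥ w).re ≤ (lambdaMax A - δ) * evNorm w ^ 2 := by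
  have hδ : ∀ᶠ δ in 𝓝[>] (0 : ℝ),
      ∀ i, hA.eigenvalues i ≠ lambdaMax A → hA.eigenvalues i ≤ lambdaMax A - δ := by
    refine eventually_all.2 fun i => ?_
    by_cases hi : hA.eigenvalues i = lambdaMax A
    · exact .of_forall fun _ h => absurd hi h
    · have hpos : 0 < lambdaMax A - hA.eigenvalues i :=
        sub_pos.2 ((hA.eigenvalues_le_lambdaMax i).lt_of_ne hi)
      filter_upwards [nhdsWithin_le_nhds (eventually_le_nhds hpos)] with δ hδ _
      linarith
  obtain ⟨δ, hgap, hδpos⟩ := (hδ.and self_mem_nhdsWithin).exists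
  refine ⟨δ, hδpos, fun w hw => ?_⟩
  have hcoef : ∀ i, hA.eigenvalues i = lambdaMax A → ⟪hA.eigenvectorBasis i, toLp 2 w⟫_ℂ = 0 := by
    intro i hi
    obtain ⟨z, hz⟩ := hsimple (hA.eigenvectorBasis i)
      (by rw [hA.mulVec_eigenvectorBasis, hi, Complex.coe_smul])
    rw [← toLp_ofLp 2 (hA.eigenvectorBasis i), ← star_dotProduct_eq_inner, hz, star_smul,
      smul_dotProduct, hw, smul_zero]
  rw [hA.re_star_dotProduct_mulVec_eq_sum, evNorm_eq_norm_toLp,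
    ← hA.eigenvectorBasis.sum_sq_norm_inner_right, Finset.mul_sum]
  refine Finset.sum_le_sum fun i _ => ?_
  by_cases hi : hA.eigenvalues i = lambdaMax A
  · simp [hcoef i hi]
  · exact mul_le_mul_of_nonneg_right (hgap i hi) (sq_nonneg _)

lemma exists_eq_smul_add_of_evNorm_eq_one {u : Fin n → ℂ} (hu : evNorm u = 1) (x : Fin n → ℂ) :
    ∃ (a : ℂ) (w : Fin n → ℂ), x = a • u + w ∧ star u ⬝ᵥ w = 0 :=
  ⟨star u ⬝ᵥ x, x - (star u ⬝ᵥ x) • u, by abel,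
    by rw [dotProduct_sub, dotProduct_smul, star_dotProduct_self, hu]; simp⟩

lemma evNorm_smul_add_sq {u w : Fin n → ℂ} (hw : star u ⬝ᵥ w = 0) (a : ℂ) :
    evNorm (a • u + w) ^ 2 = ‖a‖ ^ 2 * evNorm u ^ 2 + evNorm w ^ 2 := by
  have h : ⟪toLp 2 (a • u), toLp 2 w⟫_ℂ = 0 := by
    rw [← star_dotProduct_eq_inner, star_smul, smul_dotProduct, hw, smul_zero]
  rw [evNorm_eq_norm_toLp, toLp_add, norm_add_sq (𝕜 := ℂ), h, map_zero, mul_zero, add_zero,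
    ← evNorm_eq_norm_toLp, evNorm_smul, mul_pow]
  rfl

lemma Matrix.IsHermitian.star_dotProduct_mulVec_smul_add {A : Matrix (Fin n) (Fin n) ℂ}
    (hA : A.IsHermitian) {u w : Fin n → ℂ} {μ : ℝ} (hu : A *ᵥ u = (μ : ℂ) • u)
    (hw : star u ⬝ᵥ w = 0) (a : ℂ) :
    star (a • u + w) ⬝ᵥ A *ᵥ (a • u + w) =
      star a * a * (star u ⬝ᵥ A *ᵥ u) + star w ⬝ᵥ A *ᵥ w := by
  have hwu : star w ⬝ᵥ A *ᵥ u = 0 := by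
    rw [hu, dotProduct_smul, star_dotProduct, hw, star_zero, smul_zero]
  have huw : star u ⬝ᵥ A *ᵥ w = 0 := by
    rw [hA.star_dotProduct_mulVec_of_mulVec_eq hu, hw, mul_zero]
  simp only [star_add, star_smul, mulVec_add, mulVec_smul, add_dotProduct, dotProduct_add,
    smul_dotProduct, dotProduct_smul, hwu, huw, smul_eq_mul]
  ring

lemma norm_star_dotProduct_mulVec_sub_le (E : Matrix (Fin n) (Fin n) ℂ) (x y : Fin n → ℂ) :
    ‖star x ⬝ᵥ E *ᵥ x - star y ⬝ᵥ E *ᵥ y‖ ≤ ‖E‖ * evNorm (x - y) * (evNorm x + evNorm y) := by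
  have h : star x ⬝ᵥ E *ᵥ x - star y ⬝ᵥ E *ᵥ y =
      star (x - y) ⬝ᵥ E *ᵥ x + star y ⬝ᵥ E *ᵥ (x - y) := by
    simp only [star_sub, sub_dotProduct, mulVec_sub, dotProduct_sub]
    ring
  rw [h]
  refine (norm_add_le _ _).trans ?_
  have h₁ := norm_star_dotProduct_mulVec_le E (x - y) x
  have h₂ := norm_star_dotProduct_mulVec_le E y (x - y)
  linarith

lemma abs_re_star_dotProduct_mulVec_smul_add_sub_le (E : Matrix (Fin n) (Fin n) ℂ)
    {u w : Fin n → ℂ} {a : ℂ} (hu1 : evNorm u = 1) (hx : evNorm (a • u + w) = 1) (ha : ‖a‖ ≤ 1) :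
    |(star (a • u + w) ⬝ᵥ E *ᵥ (a • u + w)).re - ‖a‖ ^ 2 * (star u ⬝ᵥ E *ᵥ u).re|
      ≤ 2 * ‖E‖ * evNorm w := by
  have h := norm_star_dotProduct_mulVec_sub_le E (a • u + w) (a • u)
  rw [add_sub_cancel_left, hx, evNorm_smul, hu1, mul_one, mulVec_smul, star_smul,
    smul_dotProduct, dotProduct_smul, smul_smul, smul_eq_mul, Complex.star_def,
    Complex.conj_mul', ← Complex.ofReal_pow] at h
  refine (le_trans ?_ (Complex.abs_re_le_norm _)).trans (h.trans ?_)
  · rw [Complex.sub_re, Complex.re_ofReal_mul]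
  · nlinarith [mul_nonneg (norm_nonneg E) (evNorm_nonneg w)]

lemma lambdaMax_add_smul_le {A : Matrix (Fin n) (Fin n) ℂ} (hA : A.IsHermitian) {u : Fin n → ℂ}
    (hu1 : evNorm u = 1) (hu : A *ᵥ u = (lambdaMax A : ℂ) • u) {δ : ℝ} (hδ : 0 < δ)
    (hgap : ∀ w, star u ⬝ᵥ w = 0 → (star w ⬝ᵥ A *ᵥ w).re ≤ (lambdaMax A - δ) * evNorm w ^ 2)
    (E : Matrix (Fin n) (Fin n) ℂ) {s : ℝ} (hs : |s| * ‖E‖ ≤ δ / 2) :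
    lambdaMax (A + (s : ℂ) • E) ≤
      lambdaMax A + s * (star u ⬝ᵥ E *ᵥ u).re + 2 * ‖E‖ ^ 2 / δ * s ^ 2 := by
  refine lambdaMax_le ⟨u, hu1⟩ fun x hx => ?_
  obtain ⟨a, w, rfl, hw⟩ := exists_eq_smul_add_of_evNorm_eq_one hu1 x
  have hconj : star a * a = ((‖a‖ ^ 2 : ℝ) : ℂ) := by
    rw [Complex.star_def, Complex.conj_mul', Complex.ofReal_pow]
  have hpyth : ‖a‖ ^ 2 + evNorm w ^ 2 = 1 := by
    simpa [hu1, hx] using (evNorm_smul_add_sq hw a).symm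
  have hAx : (star (a • u + w) ⬝ᵥ A *ᵥ (a • u + w)).re =
      lambdaMax A * ‖a‖ ^ 2 + (star w ⬝ᵥ A *ᵥ w).re := by
    rw [hA.star_dotProduct_mulVec_smul_add hu hw, hu, dotProduct_smul, star_dotProduct_self, hu1,
      hconj, Complex.add_re, smul_eq_mul, one_pow, Complex.ofReal_one, mul_one,
      ← Complex.ofReal_mul, Complex.ofReal_re, mul_comm]
  have hE_near := abs_re_star_dotProduct_mulVec_smul_add_sub_le E hu1 hx
    (by nlinarith [norm_nonneg a, sq_nonneg (evNorm w)] : ‖a‖ ≤ 1)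
  have hc : |(star u ⬝ᵥ E *ᵥ u).re| ≤ ‖E‖ := by
    simpa [hu1] using (Complex.abs_re_le_norm _).trans (norm_star_dotProduct_mulVec_le E u u)
  rw [add_mulVec, dotProduct_add, smul_mulVec, dotProduct_smul, Complex.add_re, smul_eq_mul,
    Complex.re_ofReal_mul]
  set m := evNorm w
  set c := (star u ⬝ᵥ E *ᵥ u).re
  set Y := (star (a • u + w) ⬝ᵥ E *ᵥ (a • u + w)).re
  have hY : s * (Y - ‖a‖ ^ 2 * c) ≤ |s| * (2 * ‖E‖ * m) :=
    (le_abs_self _).trans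
      ((abs_mul _ _).trans_le (mul_le_mul_of_nonneg_left hE_near (abs_nonneg s)))
  have hsc : -(s * c) * m ^ 2 ≤ δ / 2 * m ^ 2 := by
    refine mul_le_mul_of_nonneg_right ((neg_le_abs _).trans ?_) (sq_nonneg m)
    exact (abs_mul _ _).trans_le ((mul_le_mul_of_nonneg_left hc (abs_nonneg s)).trans hs)
  have hamgm := two_mul_le_add_mul_sq (half_pos hδ) (a := m) (b := |s| * ‖E‖)
  rw [inv_div, mul_pow, sq_abs, show 2 / δ * (s ^ 2 * ‖E‖ ^ 2) = 2 * ‖E‖ ^ 2 / δ * s ^ 2 by ring]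
    at hamgm
  have hgap_w := hgap w hw
  rw [show ‖a‖ ^ 2 = 1 - m ^ 2 by linarith] at hAx hY
  linarith

lemma lambdaMax_add_le_lambdaMax_add_smul {A : Matrix (Fin n) (Fin n) ℂ} {u : Fin n → ℂ}
    (hu1 : evNorm u = 1) (hu : A *ᵥ u = (lambdaMax A : ℂ) • u) (E : Matrix (Fin n) (Fin n) ℂ)
    (s : ℝ) : lambdaMax A + s * (star u ⬝ᵥ E *ᵥ u).re ≤ lambdaMax (A + (s : ℂ) • E) := by
  have h := re_star_dotProduct_mulVec_le_lambdaMax (A + (s : ℂ) • E) u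
  rwa [hu1, one_pow, mul_one, add_mulVec, hu, smul_mulVec, dotProduct_add, dotProduct_smul,
    dotProduct_smul, star_dotProduct_self, hu1, Complex.add_re, smul_eq_mul, smul_eq_mul,
    Complex.re_ofReal_mul, Complex.re_ofReal_mul, one_pow, Complex.ofReal_one, Complex.one_re,
    mul_one] at h

theorem hasDerivAt_lambdaMax_add_smul {A : Matrix (Fin n) (Fin n) ℂ} (hA : A.IsHermitian)
    {u : Fin n → ℂ} (hu1 : evNorm u = 1) (hu : A *ᵥ u = (lambdaMax A : ℂ) • u)
    (hsimple : ∀ v, A *ᵥ v = (lambdaMax A : ℂ) • v → ∃ z : ℂ, v = z • u)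
    (E : Matrix (Fin n) (Fin n) ℂ) :
    HasDerivAt (fun s : ℝ => lambdaMax (A + (s : ℂ) • E)) (star u ⬝ᵥ E *ᵥ u).re 0 := by
  obtain ⟨δ, hδ, hgap⟩ := hA.exists_spectral_gap hsimple
  refine hasDerivAt_of_isBigO_sq (.of_bound (2 * ‖E‖ ^ 2 / δ) ?_)
  have hsmall : ∀ᶠ s in 𝓝 (0 : ℝ), |s| * ‖E‖ ≤ δ / 2 := by
    refine ((continuous_abs.mul continuous_const).tendsto' 0 0 (by simp)).eventually
      (ge_mem_nhds (by positivity))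
  filter_upwards [hsmall] with s hs
  have hlow := lambdaMax_add_le_lambdaMax_add_smul hu1 hu E s
  have hup := lambdaMax_add_smul_le hA hu1 hu hδ hgap E hs
  simp only [Complex.ofReal_zero, zero_smul, add_zero, sub_zero, smul_eq_mul, Real.norm_eq_abs,
    abs_pow, sq_abs, abs_le]
  have hK : 0 ≤ 2 * ‖E‖ ^ 2 / δ * s ^ 2 := by positivity
  constructor <;> linarith

theorem Matrix.IsHermitian.star_dotProduct_mulVec_eq_zero_of_isLocalMin
    {A E : Matrix (Fin n) (Fin n) ℂ} (hA : A.IsHermitian) (hE : E.IsHermitian) {u : Fin n → ℂ}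
    (hu1 : evNorm u = 1) (hu : A *ᵥ u = (lambdaMax A : ℂ) • u)
    (hsimple : ∀ v, A *ᵥ v = (lambdaMax A : ℂ) • v → ∃ z : ℂ, v = z • u)
    (hmin : IsLocalMin (fun s : ℝ => lambdaMax (A + (s : ℂ) • E)) 0) :
    star u ⬝ᵥ E *ᵥ u = 0 := by
  rw [← hE.ofReal_re_star_dotProduct_mulVec,
    hmin.hasDerivAt_eq_zero (hasDerivAt_lambdaMax_add_smul hA hu1 hu hsimple E),
    Complex.ofReal_zero]

lemma exists_evNorm_eq_one_of_finrank_eigenspace_eq_one {A : Matrix (Fin n) (Fin n) ℂ} {μ : ℂ}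
    (h : Module.finrank ℂ (Module.End.eigenspace A.mulVecLin μ) = 1) :
    ∃ u, evNorm u = 1 ∧ A *ᵥ u = μ • u ∧ ∀ v, A *ᵥ v = μ • v → ∃ z : ℂ, v = z • u := by
  obtain ⟨⟨v₀, hv₀⟩, hne, hspan⟩ := finrank_eq_one_iff'.1 h
  have hv₀0 : v₀ ≠ 0 := fun h => hne (Subtype.ext h)
  refine ⟨((evNorm v₀)⁻¹ : ℂ) • v₀, evNorm_inv_smul_self hv₀0, ?_, fun v hv => ?_⟩
  · rw [mulVec_smul, ← mulVecLin_apply, Module.End.mem_eigenspace_iff.1 hv₀, smul_comm]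
  obtain ⟨c, hc⟩ := hspan ⟨v, Module.End.mem_eigenspace_iff.2 hv⟩
  refine ⟨c * evNorm v₀, ?_⟩
  rw [smul_smul, mul_assoc, mul_inv_cancel₀ (Complex.ofReal_ne_zero.2 (evNorm_pos hv₀0).ne'),
    mul_one]
  exact (congrArg Subtype.val hc).symm

lemma isLocalMin_lambdaMax_add_smul {m : ℕ} (J : Matrix (Fin n) (Fin n) ℂ)
    (H : Fin m → Matrix (Fin n) (Fin n) ℂ) {t₀ : Fin m → ℝ}
    (hmin : ∀ t : Fin m → ℝ,
      lambdaMax (J + ∑ j, (t₀ j : ℂ) • H j) ≤ lambdaMax (J + ∑ j, (t j : ℂ) • H j)) (j : Fin m) :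
    IsLocalMin (fun s : ℝ => lambdaMax (J + ∑ k, (t₀ k : ℂ) • H k + (s : ℂ) • H j)) 0 := by
  refine .of_forall fun s => ?_
  have h := hmin (t₀ + Pi.single j s)
  simp only [Pi.add_apply, Complex.ofReal_add, add_smul, Finset.sum_add_distrib] at h
  simpa [Pi.single_apply, apply_ite, ite_smul, add_assoc] using h

lemma star_dotProduct_add_sum_smul_mulVec_of_isotropic {m : ℕ} (J : Matrix (Fin n) (Fin n) ℂ)
    (H : Fin m → Matrix (Fin n) (Fin n) ℂ) (t : Fin m → ℝ) {v : Fin n → ℂ}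
    (hv : ∀ j, star v ⬝ᵥ H j *ᵥ v = 0) :
    star v ⬝ᵥ (J + ∑ j, (t j : ℂ) • H j) *ᵥ v = star v ⬝ᵥ J *ᵥ v := by
  simp [add_mulVec, sum_mulVec, smul_mulVec, dotProduct_sum, hv]

lemma sSup_constrained_rayleigh_eq_lambdaMax {m : ℕ} (J : Matrix (Fin n) (Fin n) ℂ)
    (H : Fin m → Matrix (Fin n) (Fin n) ℂ) (t : Fin m → ℝ) {u : Fin n → ℂ} (hu1 : evNorm u = 1)
    (hu : (J + ∑ j, (t j : ℂ) • H j) *ᵥ u = (lambdaMax (J + ∑ j, (t j : ℂ) • H j) : ℂ) • u)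
    (hcrit : ∀ j, star u ⬝ᵥ H j *ᵥ u = 0) :
    sSup {ρ : ℝ | ∃ v : Fin n → ℂ, v ≠ 0 ∧ (∀ j, star v ⬝ᵥ H j *ᵥ v = 0) ∧
        ρ = (star v ⬝ᵥ J *ᵥ v).re / (star v ⬝ᵥ v).re} =
      lambdaMax (J + ∑ j, (t j : ℂ) • H j) := by
  refine IsGreatest.csSup_eq ⟨⟨u, ?_, hcrit, ?_⟩, ?_⟩
  · rintro rfl
    simp at hu1
  · rw [← star_dotProduct_add_sum_smul_mulVec_of_isotropic J H t hcrit, hu, dotProduct_smul,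
      star_dotProduct_self, hu1]
    simp
  · rintro _ ⟨v, hv0, hv, rfl⟩
    rw [← star_dotProduct_add_sum_smul_mulVec_of_isotropic J H t hv, star_dotProduct_self, Complex.ofReal_re,
      div_le_iff₀ (by positivity [evNorm_pos hv0])]
    exact re_star_dotProduct_mulVec_le_lambdaMax _ v

end

/-- Part (ii) of Theorem 2.6: if `L(t) = λ_max (J + ∑ tⱼHⱼ)` attains its minimum at `t̂`
and `λ_max (Ĥ)` is a simple eigenvalue of `Ĥ := J + ∑ t̂ⱼHⱼ`, then every eigenvector `u`
of `Ĥ` for `λ_max (Ĥ)` satisfies `u*Hⱼu = 0` for all `j`, and the constrained supremum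
of `u*Ju/u*u` equals `min_t λ_max (J + ∑ tⱼHⱼ) = λ_max (Ĥ)`. -/
theorem constrained_rayleigh_sup_eq_min_lambdaMax {n r : ℕ}
    (J : Matrix (Fin n) (Fin n) ℂ) (H : Fin (r + 1) → Matrix (Fin n) (Fin n) ℂ)
    (hJ : J.IsHermitian) (hH : ∀ j, (H j).IsHermitian)
    (that : Fin (r + 1) → ℝ)
    (hmin : ∀ t : Fin (r + 1) → ℝ,
      lambdaMax (J + ∑ j, (that j : ℂ) • H j) ≤ lambdaMax (J + ∑ j, (t j : ℂ) • H j))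
    (hsimple : Module.finrank ℂ
      (Module.End.eigenspace (J + ∑ j, (that j : ℂ) • H j).mulVecLin
        ((lambdaMax (J + ∑ j, (that j : ℂ) • H j) : ℂ))) = 1) :
    (∀ u : Fin n → ℂ, u ≠ 0 →
        (J + ∑ j, (that j : ℂ) • H j).mulVec u =
          (lambdaMax (J + ∑ j, (that j : ℂ) • H j) : ℂ) • u →
        ∀ j, star u ⬝ᵥ (H j).mulVec u = 0) ∧
    sSup {ρ : ℝ | ∃ u : Fin n → ℂ, u ≠ 0 ∧ (∀ j, star u ⬝ᵥ (H j).mulVec u = 0) ∧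
        ρ = (star u ⬝ᵥ J.mulVec u).re / (star u ⬝ᵥ u).re} =
      lambdaMax (J + ∑ j, (that j : ℂ) • H j) := by
  have hM : (J + ∑ j, (that j : ℂ) • H j).IsHermitian := hJ.add (isSelfAdjoint_sum _ fun j _ =>
    ((hH j).smul (Complex.conj_ofReal (that j))).isSelfAdjoint).isHermitian
  obtain ⟨u, hu1, hu, hspan⟩ := exists_evNorm_eq_one_of_finrank_eigenspace_eq_one hsimple
  have hcrit : ∀ j, star u ⬝ᵥ H j *ᵥ u = 0 := fun j =>
    hM.star_dotProduct_mulVec_eq_zero_of_isLocalMin (hH j) hu1 hu hspan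
      (isLocalMin_lambdaMax_add_smul J H hmin j)
  refine ⟨fun v _ hv j => ?_, sSup_constrained_rayleigh_eq_lambdaMax J H that hu1 hu hcrit⟩
  obtain ⟨z, rfl⟩ := hspan v hv
  rw [mulVec_smul, star_smul, smul_dotProduct, dotProduct_smul, hcrit j, smul_zero, smul_zero]
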